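/- arXiv:2207.08469 — 2 statements merged into one kernel-verified Lean document; each statement's English description precedes it below -/
import Mathlib

section
/- Fix an integer N ≥ 1 and p ∈ (0,1). The roots of the polynomial f(z) = ((p(z-1)+1)^N - (zp)^N)/(1 - p^N) are exactly z_k = (1/2)(1/p - 1)(-1 - i·cot(πk/N)) for k = 1, ..., N-1. In particular every root ζ satisfies Re(ζ) = (1 - 1/p)/2 < 0. -/
open Real

/-!
With `w = p z` and `q = 1 - p ≠ 0` the numerator vanishes iff `(w + q) ^ N = w ^ N`. Then `w ≠ 0`,
so `(w + q) / w` is an `N`-th root of unity `exp (2 i θ)` with `θ = π k / N`, and `k ≠ 0` because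
`q ≠ 0`. Solving, `w = q / (exp (2 i θ) - 1) = -(q / 2) (1 + i cot θ)`, and dividing by `p` gives
the roots, whose real part `-(1 / p - 1) / 2` is negative since `p < 1`.
-/

theorem Real.sin_pi_mul_div_ne_zero {k N : ℕ} (hk : 0 < k) (hkN : k < N) :
    sin (π * k / N) ≠ 0 := by
  have hN : (0 : ℝ) < N := by exact_mod_cast hk.trans hkN
  refine (sin_pos_of_pos_of_lt_pi (by positivity) ?_).ne'
  rw [div_lt_iff₀ hN]
  exact mul_lt_mul_of_pos_left (by exact_mod_cast hkN) pi_pos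

namespace Complex

theorem one_sub_exp_two_mul_mul_I_mul_one_add_I_mul_cot {x : ℂ} (hx : sin x ≠ 0) :
    (1 - exp (2 * x * I)) * (1 + I * cot x) = 2 := by
  have hexp : exp (2 * x * I) = (cos x + sin x * I) ^ 2 := by
    rw [← exp_mul_I, ← exp_nat_mul]; ring_nf
  have hcot : 1 + I * cot x = (sin x + I * cos x) / sin x := by
    rw [cot_eq_cos_div_sin]; field_simp
  rw [hexp, hcot, ← mul_div_assoc, div_eq_iff hx]
  linear_combination (sin x - I * cos x) * sin_sq_add_cos_sq x
    + (-2 * cos x ^ 2 * sin x - sin x ^ 3 - I * sin x ^ 2 * cos x) * I_sq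

theorem pow_eq_one_iff_exists_exp {ζ : ℂ} {N : ℕ} (hN : N ≠ 0) :
    ζ ^ N = 1 ↔ ∃ k < N, ζ = exp (2 * ↑(π * k / N) * I) := by
  have := NeZero.mk hN
  constructor
  · intro h
    obtain ⟨k, hk, rfl⟩ := (isPrimitiveRoot_exp N hN).eq_pow_of_pow_eq_one h
    refine ⟨k, hk, ?_⟩
    rw [← exp_nat_mul]; push_cast; ring_nf
  · rintro ⟨k, -, rfl⟩
    rw [← exp_nat_mul, exp_eq_one_iff]
    exact ⟨k, by push_cast; field_simp⟩

theorem add_pow_eq_pow_iff {w q : ℂ} {N : ℕ} (hq : q ≠ 0) (hN : N ≠ 0) :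
    (w + q) ^ N = w ^ N ↔
      ∃ k : ℕ, 0 < k ∧ k < N ∧ w = -(q / 2) * (1 + I * (Real.cot (π * k / N) : ℂ)) := by
  constructor
  · intro h
    have hw : w ≠ 0 := by
      rintro rfl
      simp [zero_pow hN, hq] at h
    obtain ⟨k, hkN, hk⟩ := (pow_eq_one_iff_exists_exp hN).1 <|
      show ((w + q) / w) ^ N = 1 by rw [div_pow, h, div_self (pow_ne_zero N hw)]
    have hk0 : 0 < k := by
      refine Nat.pos_of_ne_zero fun hk0 => hq ?_
      simp only [hk0, CharP.cast_eq_zero, mul_zero, zero_div, ofReal_zero, zero_mul, exp_zero,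
        div_eq_one_iff_eq hw] at hk
      linear_combination hk
    have key := one_sub_exp_two_mul_mul_I_mul_one_add_I_mul_cot
      (x := ↑(π * k / N)) (by exact_mod_cast sin_pi_mul_div_ne_zero hk0 hkN)
    rw [div_eq_iff hw] at hk
    refine ⟨k, hk0, hkN, ?_⟩
    rw [ofReal_cot]
    linear_combination (1 + I * cot ↑(π * k / N)) / 2 * hk - w / 2 * key
  · rintro ⟨k, hk0, hkN, rfl⟩
    have key := one_sub_exp_two_mul_mul_I_mul_one_add_I_mul_cot
      (x := ↑(π * k / N)) (by exact_mod_cast sin_pi_mul_div_ne_zero hk0 hkN)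
    have hroot : exp (2 * ↑(π * k / N) * I) ^ N = 1 :=
      (pow_eq_one_iff_exists_exp hN).2 ⟨k, hkN, rfl⟩
    have hshift : -(q / 2) * (1 + I * (Real.cot (π * k / N) : ℂ)) + q =
        exp (2 * ↑(π * k / N) * I) * (-(q / 2) * (1 + I * (Real.cot (π * k / N) : ℂ))) := by
      rw [ofReal_cot]
      linear_combination (-q / 2) * key
    rw [hshift, mul_pow, hroot, one_mul]

end Complex

theorem stmt_5 (N : ℕ) (hN : 1 ≤ N) (p : ℝ) (hp : p ∈ Set.Ioo (0 : ℝ) 1) :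
    (∀ z : ℂ,
        (((p : ℂ) * (z - 1) + 1) ^ N - (z * p) ^ N) / (1 - (p : ℂ) ^ N) = 0 ↔
        ∃ k : ℕ, 1 ≤ k ∧ k ≤ N - 1 ∧
          z = (1 / 2 : ℂ) * (1 / (p : ℂ) - 1) *
              (-1 - Complex.I * (Real.cot (Real.pi * k / N) : ℂ))) ∧
    (∀ z : ℂ,
        (((p : ℂ) * (z - 1) + 1) ^ N - (z * p) ^ N) / (1 - (p : ℂ) ^ N) = 0 →
        z.re = (1 - 1 / p) / 2 ∧ (1 - 1 / p) / 2 < 0) := by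
  obtain ⟨hp0, hp1⟩ := hp
  have hq : (1 - p : ℂ) ≠ 0 := by exact_mod_cast (sub_pos.2 hp1).ne'
  have hden : (1 - p ^ N : ℂ) ≠ 0 := by
    exact_mod_cast (sub_pos.2 (pow_lt_one₀ hp0.le hp1 (by omega))).ne'
  have roots : ∀ z : ℂ,
      (((p : ℂ) * (z - 1) + 1) ^ N - (z * p) ^ N) / (1 - (p : ℂ) ^ N) = 0 ↔
        ∃ k : ℕ, 1 ≤ k ∧ k ≤ N - 1 ∧
          z = (1 / 2 : ℂ) * (1 / (p : ℂ) - 1) *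
              (-1 - Complex.I * (Real.cot (Real.pi * k / N) : ℂ)) := by
    intro z
    rw [div_eq_zero_iff, or_iff_left hden, sub_eq_zero,
      show (p : ℂ) * (z - 1) + 1 = p * z + (1 - p) by ring, mul_comm z,
      Complex.add_pow_eq_pow_iff hq (by omega)]
    refine exists_congr fun k => and_congr (by omega) (and_congr (by omega) ?_)
    have hpC : (p : ℂ) ≠ 0 := by exact_mod_cast hp0.ne'
    constructor <;> intro h
    · field_simp
      linear_combination 2 * h
    · rw [h]; field_simp; ring
  refine ⟨roots, fun z hz => ?_⟩
  obtain ⟨k, -, -, rfl⟩ := (roots z).1 hz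
  refine ⟨by simp [-Complex.ofReal_cot]; ring, ?_⟩
  have : 1 < 1 / p := by rwa [one_lt_div hp0]
  linarith
end

section
/- For integers N ≥ 1, the polynomial E(z) = (z+1)^N + z^N has all its roots on the line {z ∈ ℂ : Re(z) = -1/2}. -/
/-! A root satisfies `(z + 1) ^ N = -z ^ N`, so `z` is equidistant from `0` and `-1`,
i.e. it lies on the perpendicular bisector `Re z = -1/2` of that segment. -/

theorem norm_eq_of_pow_eq_neg_pow {𝕜 : Type*} [NormedDivisionRing 𝕜] {a b : 𝕜} {n : ℕ}
    (hn : n ≠ 0) (h : a ^ n = -b ^ n) : ‖a‖ = ‖b‖ := by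
  refine (pow_left_inj₀ (norm_nonneg a) (norm_nonneg b) hn).1 ?_
  rw [← norm_pow, ← norm_pow, h, norm_neg]

theorem Complex.re_eq_neg_half_of_norm_add_one_eq {z : ℂ} (h : ‖z + 1‖ = ‖z‖) :
    z.re = -1 / 2 := by
  have hsq : Complex.normSq (z + 1) = Complex.normSq z := by
    rw [← Complex.sq_norm, ← Complex.sq_norm, h]
  simp only [Complex.normSq_apply, Complex.add_re, Complex.add_im, Complex.one_re,
    Complex.one_im, add_zero] at hsq
  linarith

theorem stmt_8 (N : ℕ) (hN : 1 ≤ N) (z : ℂ)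
    (hz : (z + 1) ^ N + z ^ N = 0) : z.re = -1/2 := by
  have hpow : (z + 1) ^ N = -z ^ N := eq_neg_of_add_eq_zero_left hz
  exact Complex.re_eq_neg_half_of_norm_add_one_eq
    (norm_eq_of_pow_eq_neg_pow (Nat.one_le_iff_ne_zero.mp hN) hpow)
end
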